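/- With α_p as above and d ≥ 2, |α₁² − α₀α₂| ≤ 1/(2d). -/

import Mathlib

/-!
With weights `w k = C(d, k) ψ(k/d) ∈ [0, C(d, k)]` and `v k = d - k`, the identities
`(d - k) C(d, k) = d C(d - 1, k)` and `(d - k)(d - k - 1) C(d, k) = d (d - 1) C(d - 2, k)` turn
`2^d α₀, d 2^d α₁, d (d - 1) 2^d α₂` into the moments `A = ∑ w`, `B = ∑ w v`, `C - B` with
`C = ∑ w v²`. The numerator `B² (d - 1) - A (C - B) d` of `α₁² - α₀ α₂` is then squeezed between
`-d (AC - B²)` and `A ∑ w v (d - v) ≤ A² d² / 4`, and `AC - B²` (a weighted variance) is monotone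
in the weights, so it is at most its value `d 4^d / 4` for the binomial weights themselves; and
`d² 4^d / 4 ≤ d (d - 1) 4^d / 2` once `d ≥ 2`.
-/

open Finset

section WeightedSpread

variable {ι : Type*} (s : Finset ι) (w v : ι → ℝ)

/-- `(∑ w) ^ 2` times the variance of `v` under the weights `w`. -/
noncomputable def weightedSpread : ℝ :=
  (∑ i ∈ s, w i) * (∑ i ∈ s, w i * v i ^ 2) - (∑ i ∈ s, w i * v i) ^ 2

theorem two_mul_weightedSpread :
    2 * weightedSpread s w v = ∑ i ∈ s, ∑ j ∈ s, w i * w j * (v i - v j) ^ 2 := by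
  have expand : ∀ i j, w i * w j * (v i - v j) ^ 2 =
      w i * v i ^ 2 * w j - 2 * (w i * v i * (w j * v j)) + w i * (w j * v j ^ 2) := by
    intros; ring
  simp only [weightedSpread, expand, sum_add_distrib, sum_sub_distrib, ← sum_mul, ← mul_sum]
  ring

variable {s w}

theorem weightedSpread_nonneg (hw : ∀ i ∈ s, 0 ≤ w i) : 0 ≤ weightedSpread s w v := by
  have hsum : 0 ≤ ∑ i ∈ s, ∑ j ∈ s, w i * w j * (v i - v j) ^ 2 :=
    sum_nonneg fun i hi => sum_nonneg fun j hj =>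
      mul_nonneg (mul_nonneg (hw i hi) (hw j hj)) (sq_nonneg _)
  linarith [two_mul_weightedSpread s w v]

theorem weightedSpread_le_of_le {c : ι → ℝ} (hw : ∀ i ∈ s, 0 ≤ w i) (hwc : ∀ i ∈ s, w i ≤ c i) :
    weightedSpread s w v ≤ weightedSpread s c v := by
  have hsum : ∑ i ∈ s, ∑ j ∈ s, w i * w j * (v i - v j) ^ 2 ≤
      ∑ i ∈ s, ∑ j ∈ s, c i * c j * (v i - v j) ^ 2 :=
    sum_le_sum fun i hi => sum_le_sum fun j hj => by
      gcongr
      · exact hw j hj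
      · exact (hw i hi).trans (hwc i hi)
      · exact hwc i hi
      · exact hwc j hj
  linarith [two_mul_weightedSpread s w v, two_mul_weightedSpread s c v]

end WeightedSpread

theorem cast_sub_mul_choose (n k : ℕ) : ((n : ℝ) - k) * n.choose k = n * (n - 1).choose k := by
  rcases Nat.lt_or_ge n k with h | h
  · rw [Nat.choose_eq_zero_of_lt h, Nat.choose_eq_zero_of_lt (by omega)]; simp
  · obtain _ | m := n
    · simp_all
    · have := Nat.choose_mul_succ_eq m k
      rw [← Nat.cast_sub h, Nat.add_sub_cancel]
      norm_cast
      linarith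

theorem cast_sub_mul_sub_one_mul_choose (n k : ℕ) :
    ((n : ℝ) - k) * ((n : ℝ) - k - 1) * n.choose k = n * (n - 1) * (n - 2).choose k := by
  obtain _ | m := n
  · rcases k with _ | k <;> simp
  · have h₁ := cast_sub_mul_choose (m + 1) k
    have h₂ := cast_sub_mul_choose m k
    push_cast at h₁ ⊢
    linear_combination ((m : ℝ) - k) * h₁ + ((m : ℝ) + 1) * h₂

theorem sum_range_choose_of_le {m n : ℕ} (h : m ≤ n) :
    ∑ k ∈ range (n + 1), (m.choose k : ℝ) = 2 ^ m := by
  rw [← sum_subset (range_subset_range.2 (by omega : m + 1 ≤ n + 1)) fun k _ hk =>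
    by rw [Nat.choose_eq_zero_of_lt (by simpa using hk), Nat.cast_zero]]
  exact_mod_cast Nat.sum_range_choose m

theorem mul_sum_choose_sub_one_mul (d : ℕ) (f : ℕ → ℝ) :
    (d : ℝ) * ∑ k ∈ range (d + 1), ((d - 1).choose k : ℝ) * f k =
      ∑ k ∈ range (d + 1), (d.choose k : ℝ) * f k * (d - k) := by
  rw [mul_sum]
  refine sum_congr rfl fun k _ => ?_
  rw [← mul_assoc, ← cast_sub_mul_choose]
  ring

theorem mul_sum_choose_sub_two_mul (d : ℕ) (f : ℕ → ℝ) :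
    (d : ℝ) * (d - 1) * ∑ k ∈ range (d + 1), ((d - 2).choose k : ℝ) * f k =
      ∑ k ∈ range (d + 1), (d.choose k : ℝ) * f k * (d - k) ^ 2 -
        ∑ k ∈ range (d + 1), (d.choose k : ℝ) * f k * (d - k) := by
  rw [mul_sum, ← sum_sub_distrib]
  refine sum_congr rfl fun k _ => ?_
  rw [← mul_assoc, ← cast_sub_mul_sub_one_mul_choose]
  ring

theorem weightedSpread_choose (d : ℕ) :
    weightedSpread (range (d + 1)) (fun k => (d.choose k : ℝ)) (fun k => d - k) =
      d * (2 ^ d) ^ 2 / 4 := by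
  have h₀ := sum_range_choose_of_le (le_refl d)
  have h₁ := mul_sum_choose_sub_one_mul d 1
  have h₂ := mul_sum_choose_sub_two_mul d 1
  simp only [Pi.one_apply, mul_one, sum_range_choose_of_le (Nat.sub_le d 1),
    sum_range_choose_of_le (Nat.sub_le d 2)] at h₁ h₂
  rw [weightedSpread, h₀, ← h₁, sub_eq_iff_eq_add.1 h₂.symm, ← h₁]
  obtain _ | _ | n := d
  · simp
  · norm_num
  · push_cast
    ring

theorem abs_sq_div_sub_mul_div_le {A B C D P : ℝ} (hD : 2 ≤ D) (hP : 0 < P) (hA : 0 ≤ A)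
    (hAP : A ≤ P) (hB : 0 ≤ B) (hBA : B ≤ D * A) (hCS : 0 ≤ A * C - B ^ 2)
    (hspread : A * C - B ^ 2 ≤ D * P ^ 2 / 4) (hC : D * B - C ≤ D ^ 2 / 4 * A) :
    |(B / (P * D)) ^ 2 - A / P * ((C - B) / (P * (D * (D - 1))))| ≤ 1 / (2 * D) := by
  have hD₁ : 0 < D - 1 := by linarith
  have hnum : |B ^ 2 * (D - 1) - A * (C - B) * D| ≤ D ^ 2 * P ^ 2 / 4 := by
    rw [abs_le]
    constructor
    · -- the numerator is `D (B² - AC) + B (AD - B)`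
      nlinarith [mul_nonneg hB (sub_nonneg.2 hBA)]
    · -- the numerator is `(D - 1) (B² - AC) + A (DB - C)`
      nlinarith [mul_le_mul_of_nonneg_left hC hA, mul_le_mul hAP hAP hA hP.le]
  have hden : 0 < P ^ 2 * D ^ 2 * (D - 1) := by positivity
  calc |(B / (P * D)) ^ 2 - A / P * ((C - B) / (P * (D * (D - 1))))|
      = |(B ^ 2 * (D - 1) - A * (C - B) * D) / (P ^ 2 * D ^ 2 * (D - 1))| := by
        congr 1
        field_simp
    _ = |B ^ 2 * (D - 1) - A * (C - B) * D| / (P ^ 2 * D ^ 2 * (D - 1)) := by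
        rw [abs_div, abs_of_pos hden]
    _ ≤ D ^ 2 * P ^ 2 / 4 / (P ^ 2 * D ^ 2 * (D - 1)) := by gcongr
    _ ≤ 1 / (2 * D) := by
        rw [div_le_div_iff₀ hden (by positivity)]
        nlinarith [mul_nonneg (mul_nonneg (sq_nonneg P) (sq_nonneg D)) (sub_nonneg.2 hD)]

theorem abs_sq_sub_mul_le_of_nonneg_of_le_one (d : ℕ) (hd : 2 ≤ d) (f : ℕ → ℝ)
    (hf₀ : ∀ k, 0 ≤ f k) (hf₁ : ∀ k, f k ≤ 1) (α : ℕ → ℝ)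
    (hα : ∀ p, α p = (1 / 2 ^ d) *
      ∑ k ∈ range (d + 1), (Nat.choose (d - p) k : ℝ) * f k) :
    |α 1 ^ 2 - α 0 * α 2| ≤ 1 / (2 * d) := by
  set w : ℕ → ℝ := fun k => d.choose k * f k
  set v : ℕ → ℝ := fun k => d - k
  have hw₀ : ∀ k ∈ range (d + 1), 0 ≤ w k := fun k _ => mul_nonneg (Nat.cast_nonneg _) (hf₀ k)
  have hwc : ∀ k ∈ range (d + 1), w k ≤ d.choose k := fun k _ =>
    mul_le_of_le_one_right (Nat.cast_nonneg _) (hf₁ k)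
  have hv : ∀ k ∈ range (d + 1), 0 ≤ v k ∧ v k ≤ d := fun k hk => by
    have : (k : ℝ) ≤ d := by exact_mod_cast mem_range_succ_iff.1 hk
    constructor <;> simp only [v] <;> linarith [k.cast_nonneg' (α := ℝ)]
  have hd₂ : (2 : ℝ) ≤ d := by exact_mod_cast hd
  have hd₀ : (d : ℝ) ≠ 0 := by positivity
  have hd₁ : (d : ℝ) - 1 ≠ 0 := by linarith
  obtain ⟨A, hA⟩ : ∃ A, ∑ k ∈ range (d + 1), w k = A := ⟨_, rfl⟩
  obtain ⟨B, hB⟩ : ∃ B, ∑ k ∈ range (d + 1), w k * v k = B := ⟨_, rfl⟩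
  obtain ⟨C, hC⟩ : ∃ C, ∑ k ∈ range (d + 1), w k * v k ^ 2 = C := ⟨_, rfl⟩
  have hα₀ : α 0 = A / 2 ^ d := by rw [hα, ← hA]; simp [w, div_eq_inv_mul]
  have hα₁ : α 1 = B / (2 ^ d * d) := by
    rw [hα, ← hB, ← mul_sum_choose_sub_one_mul]; field_simp
  have hα₂ : α 2 = (C - B) / (2 ^ d * (d * (d - 1))) := by
    rw [hα, ← hB, ← hC, ← mul_sum_choose_sub_two_mul]; field_simp
  have hspread : weightedSpread (range (d + 1)) w v = A * C - B ^ 2 := by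
    rw [weightedSpread, hA, hB, hC]
  rw [hα₀, hα₁, hα₂]
  refine abs_sq_div_sub_mul_div_le hd₂ (by positivity) ?_ ?_ ?_ ?_ ?_ ?_ ?_
  · exact hA ▸ sum_nonneg hw₀
  · rw [← hA, ← sum_range_choose_of_le le_rfl]; exact sum_le_sum hwc
  · exact hB ▸ sum_nonneg fun k hk => mul_nonneg (hw₀ k hk) (hv k hk).1
  · rw [← hA, ← hB, mul_sum]
    exact sum_le_sum fun k hk => by nlinarith [hw₀ k hk, hv k hk]
  · exact hspread ▸ weightedSpread_nonneg v hw₀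
  · rw [← hspread, ← weightedSpread_choose]
    exact weightedSpread_le_of_le v hw₀ hwc
  · rw [← hA, ← hB, ← hC, mul_sum, mul_sum, ← sum_sub_distrib]
    exact sum_le_sum fun k hk => by nlinarith [hw₀ k hk, hv k hk, sq_nonneg (v k - d / 2)]

theorem stmt10_general (d : ℕ) (hd : 2 ≤ d) (ν : ℝ)
    (ψ : ℝ → ℝ)
    (hψ : ∀ t, ψ t = Real.exp (-(1 - Real.sqrt (1 - t)) ^ 2 / (2 * ν ^ 2)))
    (α : ℕ → ℝ)
    (hα : ∀ p, α p = (1 / 2 ^ d) *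
      ∑ s ∈ Finset.range (d + 1), (Nat.choose (d - p) s : ℝ) * ψ ((s : ℝ) / d)) :
    |α 1 ^ 2 - α 0 * α 2| ≤ 1 / (2 * d) := by
  have hψ₀ : ∀ t, 0 ≤ ψ t := fun t => hψ t ▸ (Real.exp_pos _).le
  have hψ₁ : ∀ t, ψ t ≤ 1 := fun t => by
    rw [hψ, Real.exp_le_one_iff]
    exact div_nonpos_of_nonpos_of_nonneg (neg_nonpos.2 (sq_nonneg _)) (by positivity)
  exact abs_sq_sub_mul_le_of_nonneg_of_le_one d hd (fun k => ψ (k / d)) (fun _ => hψ₀ _)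
    (fun _ => hψ₁ _) α hα

theorem stmt10 (d : ℕ) (hd : 2 ≤ d) (ν : ℝ) (hν : 0 < ν)
    (ψ : ℝ → ℝ)
    (hψ : ∀ t, ψ t = Real.exp (-(1 - Real.sqrt (1 - t)) ^ 2 / (2 * ν ^ 2)))
    (α : ℕ → ℝ)
    (hα : ∀ p, α p = (1 / 2 ^ d) *
      ∑ s ∈ Finset.range (d + 1), (Nat.choose (d - p) s : ℝ) * ψ ((s : ℝ) / d)) :
    |α 1 ^ 2 - α 0 * α 2| ≤ 1 / (2 * d) :=
  stmt10_general d hd ν ψ hψ α hα
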